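/- arXiv:0801.0949 — 2 statements merged into one kernel-verified Lean document; each statement's English description precedes it below -/
import Mathlib

section
/- Liveness Theorem (backward-simulation case): Let (A, L) and (B, M) be live automata with the same external actions. If there exists an image-finite liveness-preserving backward simulation from (A, L) to (B, M) with respect to some invariants, then (A, L) ≤ℓ (B, M) in the live preorder: traces(lexecs(A, L)) ⊆ traces(lexecs(B, M)), i.e., every live trace of (A, L) is a live trace of (B, M). -/
/- Background formalization: automata, executions, traces, complemented-pairs
   liveness conditions, liveness-preserving simulation relations, etc. -/

open Classical

section AutomatonDefs

/-- An automaton over a type `S` of states and a type `Act` of actions. -/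
structure Automaton (S : Type*) (Act : Type*) where
  start : Set S
  start_nonempty : start.Nonempty
  ext : Set Act
  internal : Set Act
  ext_int_disjoint : Disjoint ext internal
  steps : Set (S × Act × S)
  steps_valid : ∀ t ∈ steps, t.2.1 ∈ ext ∪ internal

variable {S SA SB Act : Type*}

/-- A finite execution fragment `s₀ a₁ s₁ ⋯ a_len s_len`; only the values
`st i` for `i ≤ len` and `act i` for `i < len` are relevant
(`act i` is the action between `st i` and `st (i+1)`). -/
structure FinFrag (S : Type*) (Act : Type*) where
  len : ℕ
  st : ℕ → S
  act : ℕ → Act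

def FinFrag.IsFragOf (f : FinFrag S Act) (A : Automaton S Act) : Prop :=
  ∀ i < f.len, (f.st i, f.act i, f.st (i + 1)) ∈ A.steps

def FinFrag.IsExecOf (f : FinFrag S Act) (A : Automaton S Act) : Prop :=
  f.IsFragOf A ∧ f.st 0 ∈ A.start

def FinFrag.fstate (f : FinFrag S Act) : S := f.st 0

def FinFrag.lstate (f : FinFrag S Act) : S := f.st f.len

/-- A finite execution fragment meets a set `X` of states iff some state along
it lies in `X`. -/
def FinFrag.Meets (f : FinFrag S Act) (X : Set S) : Prop := ∃ i ≤ f.len, f.st i ∈ X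

def FinFrag.Prefix (f g : FinFrag S Act) : Prop :=
  f.len ≤ g.len ∧ (∀ i ≤ f.len, f.st i = g.st i) ∧ ∀ i < f.len, f.act i = g.act i

def FinFrag.StrictPrefix (f g : FinFrag S Act) : Prop :=
  f.Prefix g ∧ f.len < g.len

/-- Equality of finite fragments (up to irrelevant values). -/
def FinFrag.Equiv (f g : FinFrag S Act) : Prop :=
  f.len = g.len ∧ (∀ i ≤ f.len, f.st i = g.st i) ∧ ∀ i < f.len, f.act i = g.act i

/-- The trace of a finite list of actions: the sublist of external actions. -/
noncomputable def ltrace (ext : Set Act) (l : List Act) : List Act :=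
  l.filter fun a => decide (a ∈ ext)

/-- The trace of a finite execution fragment. -/
noncomputable def FinFrag.trace (f : FinFrag S Act) (ext : Set Act) : List Act :=
  ltrace ext ((List.range f.len).map f.act)

/-- trace(a) = a if a is external, the empty sequence otherwise. -/
noncomputable def atrace (ext : Set Act) (a : Act) : List Act :=
  if a ∈ ext then [a] else []

/-- The trace of the segment of actions `b_{j+1} ⋯ b_k` (0-indexed:
`act j, …, act (k-1)`) of an execution with actions `act`. -/
noncomputable def segTrace (ext : Set Act) (act : ℕ → Act) (j k : ℕ) : List Act :=
  ltrace ext ((List.range (k - j)).map fun t => act (j + t))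

/-- An infinite execution `s₀ a₁ s₁ a₂ s₂ ⋯` (with `act i` the action between
`st i` and `st (i+1)`). -/
structure InfExec (S : Type*) (Act : Type*) where
  st : ℕ → S
  act : ℕ → Act

def InfExec.IsExecOf (e : InfExec S Act) (A : Automaton S Act) : Prop :=
  e.st 0 ∈ A.start ∧ ∀ i, (e.st i, e.act i, e.st (i + 1)) ∈ A.steps

/-- The prefix `α|_n` of an infinite execution. -/
def InfExec.take (e : InfExec S Act) (n : ℕ) : FinFrag S Act := ⟨n, e.st, e.act⟩

/-- An infinite execution extends a finite one. -/
def InfExec.Extends (e : InfExec S Act) (f : FinFrag S Act) : Prop :=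
  (∀ i ≤ f.len, e.st i = f.st i) ∧ ∀ i < f.len, e.act i = f.act i

/-- `P n` holds for infinitely many `n`. -/
def InfOften (P : ℕ → Prop) : Prop := ∀ n, ∃ m, n ≤ m ∧ P m

/-- A complemented pair `⟨R, G⟩` of sets of states. -/
structure CPair (S : Type*) where
  R : Set S
  G : Set S

/-- `α ⊨ p`: if `α` contains infinitely many states in `p.R` then it contains
infinitely many states in `p.G`. -/
def InfExec.Sat (e : InfExec S Act) (p : CPair S) : Prop :=
  InfOften (fun n => e.st n ∈ p.R) → InfOften fun n => e.st n ∈ p.G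

/-- The live executions of `(A, L)`. -/
def lexecs (A : Automaton S Act) (L : Set (CPair S)) : Set (InfExec S Act) :=
  {e | e.IsExecOf A ∧ ∀ p ∈ L, e.Sat p}

/-- Machine closure: `(A, L)` is a live automaton (equivalently, `L` is a
complemented-pairs liveness condition over `A`). -/
def IsLivenessCondition (A : Automaton S Act) (L : Set (CPair S)) : Prop :=
  ∀ f : FinFrag S Act, f.IsExecOf A → ∃ e ∈ lexecs A L, e.Extends f

/-- The semantic closure of `L` in `A`. -/
def closL (A : Automaton S Act) (L : Set (CPair S)) : Set (CPair S) :=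
  {p | ∀ e ∈ lexecs A L, e.Sat p}

/-- A state is reachable iff it occurs in some execution. -/
def Reachable (A : Automaton S Act) (s : S) : Prop :=
  ∃ f : FinFrag S Act, f.IsExecOf A ∧ ∃ i ≤ f.len, f.st i = s

/-- An invariant is a superset of the reachable states. -/
def IsAutInvariant (A : Automaton S Act) (I : Set S) : Prop :=
  ∀ s, Reachable A s → s ∈ I

/-- `g[s]` for a relation `g ⊆ states(A) × states(B)`. -/
def gImg (g : Set (SA × SB)) (s : SA) : Set SB := {u | (s, u) ∈ g}

def ImageFinite (g : Set (SA × SB)) : Prop := ∀ s, (gImg g s).Finite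

/-- A transition `s →a s'` of `A` is always-silent (w.r.t. `g`, `I_A`, `I_B`). -/
def AlwaysSilent (A : Automaton SA Act) (B : Automaton SB Act)
    (IA : Set SA) (IB : Set SB) (g : Set (SA × SB)) (s : SA) (a : Act) (s' : SA) : Prop :=
  s ∈ IA ∧ ∀ β : FinFrag SB Act, β.IsFragOf B → β.fstate ∈ gImg g s ∩ IB →
    β.lstate ∈ gImg g s' → β.trace B.ext = atrace A.ext a → β.len = 0

/-- A transition `s →a s'` of `A` is sometimes-silent (w.r.t. `g`, `I_A`, `I_B`). -/
def SometimesSilent (A : Automaton SA Act) (B : Automaton SB Act)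
    (IA : Set SA) (IB : Set SB) (g : Set (SA × SB)) (s : SA) (a : Act) (s' : SA) : Prop :=
  s ∈ IA ∧ ∃ β : FinFrag SB Act, β.IsFragOf B ∧ β.fstate ∈ gImg g s ∩ IB ∧
    β.lstate ∈ gImg g s' ∧ β.trace B.ext = atrace A.ext a ∧ β.len = 0

/-- `(g, h)` is a liveness-preserving forward simulation from `(A, L)` to
`(B, M)` with respect to invariants `I_A`, `I_B`. -/
structure IsLPForwardSim (A : Automaton SA Act) (B : Automaton SB Act)
    (L : Set (CPair SA)) (M : Set (CPair SB)) (IA : Set SA) (IB : Set SB)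
    (g : Set (SA × SB)) (h : CPair SB → CPair SA) : Prop where
  h_total : ∀ q ∈ M, h q ∈ closL A L
  start_cond : ∀ s ∈ A.start, ∃ u ∈ B.start, (s, u) ∈ g
  step_cond : ∀ s a s', (s, a, s') ∈ A.steps → s ∈ IA → ∀ u ∈ gImg g s ∩ IB,
    ∃ β : FinFrag SB Act, β.IsFragOf B ∧ β.fstate = u ∧ β.lstate ∈ gImg g s' ∧
      β.trace B.ext = atrace A.ext a ∧
      ∀ q ∈ M, (β.Meets q.R → s ∈ (h q).R ∨ s' ∈ (h q).R) ∧
        ((s ∈ (h q).G ∨ s' ∈ (h q).G) → β.Meets q.G)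
  nonsilent : ∀ e ∈ lexecs A L,
    InfOften fun n => ¬ AlwaysSilent A B IA IB g (e.st n) (e.act n) (e.st (n + 1))

/-- `(g, h)` is a liveness-preserving backward simulation from `(A, L)` to
`(B, M)` with respect to invariants `I_A`, `I_B`. -/
structure IsLPBackwardSim (A : Automaton SA Act) (B : Automaton SB Act)
    (L : Set (CPair SA)) (M : Set (CPair SB)) (IA : Set SA) (IB : Set SB)
    (g : Set (SA × SB)) (h : CPair SB → CPair SA) : Prop where
  h_total : ∀ q ∈ M, h q ∈ closL A L
  nonempty_cond : ∀ s ∈ IA, (gImg g s ∩ IB).Nonempty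
  start_cond : ∀ s ∈ A.start, gImg g s ∩ IB ⊆ B.start
  step_cond : ∀ s a s', (s, a, s') ∈ A.steps → s ∈ IA → ∀ u' ∈ gImg g s' ∩ IB,
    ∃ β : FinFrag SB Act, β.IsFragOf B ∧ β.fstate ∈ gImg g s ∩ IB ∧ β.lstate = u' ∧
      β.trace B.ext = atrace A.ext a ∧
      ∀ q ∈ M, (β.Meets q.R → s ∈ (h q).R ∨ s' ∈ (h q).R) ∧
        ((s ∈ (h q).G ∨ s' ∈ (h q).G) → β.Meets q.G)
  nonsilent : ∀ e ∈ lexecs A L,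
    InfOften fun n => ¬ SometimesSilent A B IA IB g (e.st n) (e.act n) (e.st (n + 1))

/-- Live index mapping from a finite execution `α` of `A` to a finite
execution `β` of `B` with respect to `(R, H)`. -/
structure LiveIndexMapFF (A : Automaton SA Act) (B : Automaton SB Act)
    (R : Set (SA × SB)) (M : Set (CPair SB)) (H : CPair SB → CPair SA)
    (α : FinFrag SA Act) (β : FinFrag SB Act) (m : ℕ → ℕ) : Prop where
  zero : m 0 = 0
  mono : ∀ i j, i ≤ j → j ≤ α.len → m i ≤ m j
  bound : ∀ i ≤ α.len, m i ≤ β.len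
  rel : ∀ i ≤ α.len, (α.st i, β.st (m i)) ∈ R
  tr : ∀ i, 0 < i → i ≤ α.len →
    segTrace B.ext β.act (m (i - 1)) (m i) = atrace A.ext (α.act (i - 1))
  cofinal : ∀ j ≤ β.len, ∃ i ≤ α.len, j ≤ m i
  pairR : ∀ q ∈ M, ∀ i, 0 < i → i ≤ α.len →
    (∃ j, m (i - 1) ≤ j ∧ j ≤ m i ∧ β.st j ∈ q.R) →
      α.st (i - 1) ∈ (H q).R ∨ α.st i ∈ (H q).R
  pairG : ∀ q ∈ M, ∀ i, 0 < i → i ≤ α.len →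
    (α.st (i - 1) ∈ (H q).G ∨ α.st i ∈ (H q).G) →
      ∃ j, m (i - 1) ≤ j ∧ j ≤ m i ∧ β.st j ∈ q.G

/-- Live index mapping from an infinite execution `α` of `A` to an infinite
execution `β` of `B` with respect to `(R, H)`. -/
structure LiveIndexMapII (A : Automaton SA Act) (B : Automaton SB Act)
    (R : Set (SA × SB)) (M : Set (CPair SB)) (H : CPair SB → CPair SA)
    (α : InfExec SA Act) (β : InfExec SB Act) (m : ℕ → ℕ) : Prop where
  zero : m 0 = 0
  mono : Monotone m
  rel : ∀ i, (α.st i, β.st (m i)) ∈ R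
  tr : ∀ i, 0 < i →
    segTrace B.ext β.act (m (i - 1)) (m i) = atrace A.ext (α.act (i - 1))
  cofinal : ∀ j, ∃ i, j ≤ m i
  pairR : ∀ q ∈ M, ∀ i, 0 < i →
    (∃ j, m (i - 1) ≤ j ∧ j ≤ m i ∧ β.st j ∈ q.R) →
      α.st (i - 1) ∈ (H q).R ∨ α.st i ∈ (H q).R
  pairG : ∀ q ∈ M, ∀ i, 0 < i →
    (α.st (i - 1) ∈ (H q).G ∨ α.st i ∈ (H q).G) →
      ∃ j, m (i - 1) ≤ j ∧ j ≤ m i ∧ β.st j ∈ q.G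

/-- The trace of an infinite execution, as a partial sequence: position `n`
holds the `n`-th external action, if it exists. -/
noncomputable def itrace (ext : Set Act) (act : ℕ → Act) : ℕ → Option Act := fun n =>
  if h : ∃ i, act i ∈ ext ∧ {j | j < i ∧ act j ∈ ext}.ncard = n then some (act h.choose)
  else none

/-- The set of traces of a set of infinite executions. -/
noncomputable def tracesOf (ext : Set Act) (Φ : Set (InfExec S Act)) :
    Set (ℕ → Option Act) :=
  (fun e => itrace ext e.act) '' Φ

/-- `r ⪯ w` for a strict order `lt`. -/
def pLe (lt : CPair S → CPair S → Prop) (r w : CPair S) : Prop := lt r w ∨ r = w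

/-- The immediate successors of `r` in `(P, lt)`. -/
def succSet (P : Set (CPair S)) (lt : CPair S → CPair S → Prop) (r : CPair S) :
    Set (CPair S) :=
  {w | w ∈ P ∧ lt r w ∧ ∀ w' ∈ P, pLe lt r w' → lt w' w → r = w'}

/-- No state occurs infinitely often along any execution in `φ`. -/
def NoInfRep (φ : Set (InfExec S Act)) : Prop :=
  ∀ e ∈ φ, ∀ s : S, {n | e.st n = s}.Finite

/-- `γ ⊴ α`: some suffix of `γ` maps into `α` as in the robustness definition. -/
def Subsumes (γ α : InfExec S Act) : Prop :=
  ∃ k : ℕ, ∃ m : ℕ → ℕ, (∀ i, α.st (m i) = γ.st (k + i)) ∧ ∀ i, {j | m j = i}.Finite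

/-- A live execution property for `A`. -/
def IsLiveExecProperty (A : Automaton S Act) (φ : Set (InfExec S Act)) : Prop :=
  (∀ e ∈ φ, e.IsExecOf A) ∧
    ∀ f : FinFrag S Act, f.IsExecOf A → ∃ e ∈ φ, e.Extends f

/-- `φ` is robust for `A`. -/
def Robust (A : Automaton S Act) (φ : Set (InfExec S Act)) : Prop :=
  ∀ γ α : InfExec S Act, γ.IsExecOf A → α.IsExecOf A → Subsumes γ α → γ ∈ φ → α ∈ φ

/-- `A` is a forest automaton: each reachable state is the last state of
exactly one finite execution. -/
def IsForest (A : Automaton S Act) : Prop :=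
  ∀ f g : FinFrag S Act, f.IsExecOf A → g.IsExecOf A → f.lstate = g.lstate → f.Equiv g

/-- A (finite or infinite) execution, with length in `ℕ∞`. -/
structure ExecE (S : Type*) (Act : Type*) where
  len : ℕ∞
  st : ℕ → S
  act : ℕ → Act

def ExecE.IsExecOf (e : ExecE S Act) (A : Automaton S Act) : Prop :=
  e.st 0 ∈ A.start ∧ ∀ i : ℕ, (i : ℕ∞) < e.len → (e.st i, e.act i, e.st (i + 1)) ∈ A.steps

/-- Node of the digraph induced by `α`, `b = (g,h)`, `I_B`, `L`, `M`. -/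
def DNode (IB : Set SB) (g : Set (SA × SB)) (α : ExecE SA Act) (x : SB × ℕ) : Prop :=
  (x.2 : ℕ∞) ≤ α.len ∧ x.1 ∈ gImg g (α.st x.2) ∩ IB

/-- Edge of the digraph induced by `α`, `b = (g,h)`, `I_B`, `L`, `M`. -/
def DEdge (A : Automaton SA Act) (B : Automaton SB Act) (IB : Set SB)
    (g : Set (SA × SB)) (M : Set (CPair SB)) (h : CPair SB → CPair SA)
    (α : ExecE SA Act) (x y : SB × ℕ) : Prop :=
  DNode IB g α x ∧ DNode IB g α y ∧ y.2 = x.2 + 1 ∧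
  ∃ β : FinFrag SB Act, β.IsFragOf B ∧ β.fstate = x.1 ∧ β.lstate = y.1 ∧
    β.trace B.ext = atrace A.ext (α.act x.2) ∧
    ∀ q ∈ M, (β.Meets q.R → α.st x.2 ∈ (h q).R ∨ α.st (x.2 + 1) ∈ (h q).R) ∧
      ((α.st x.2 ∈ (h q).G ∨ α.st (x.2 + 1) ∈ (h q).G) → β.Meets q.G)

/-- Root of the induced digraph: a node with no incoming edge. -/
def DRoot (A : Automaton SA Act) (B : Automaton SB Act) (IB : Set SB)
    (g : Set (SA × SB)) (M : Set (CPair SB)) (h : CPair SB → CPair SA)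
    (α : ExecE SA Act) (x : SB × ℕ) : Prop :=
  DNode IB g α x ∧ ¬ ∃ y, DEdge A B IB g M h α y x

end AutomatonDefs

/-!
Fix a live execution `α` of `A`. The sets `g[αᵢ] ∩ I_B` are finite and nonempty, and by the
step condition every element of level `i + 1` is reached from some element of level `i` by a
fragment of `B` matching the `i`-th step of `α`; Kőnig's lemma gives an infinite chain of such
fragments. Their concatenation is an execution of `B` (it starts in a start state, and it is
infinite because infinitely many steps of `α` are not sometimes-silent) with the same trace as
`α`. It is live: infinitely many `q.R`-states in it force infinitely many `(h q).R`-states in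
`α`, hence infinitely many `(h q).G`-states since `h q ∈ clos(L)`, hence infinitely many
`q.G`-states.
-/

section PrefixTrace

variable {Act : Type*} (ext : Set Act)

noncomputable def prefixTrace (act : ℕ → Act) (k : ℕ) : List Act :=
  ltrace ext ((List.range k).map act)

lemma prefixTrace_zero (act : ℕ → Act) : prefixTrace ext act 0 = [] := rfl

lemma prefixTrace_add (act : ℕ → Act) (j d : ℕ) :
    prefixTrace ext act (j + d) = prefixTrace ext act j ++ segTrace ext act j (j + d) := by
  simp [prefixTrace, segTrace, ltrace, List.range_add, List.filter_append, Function.comp_def]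

lemma prefixTrace_succ (act : ℕ → Act) (k : ℕ) :
    prefixTrace ext act (k + 1) = prefixTrace ext act k ++ atrace ext (act k) := by
  by_cases h : act k ∈ ext <;>
    simp [prefixTrace, ltrace, atrace, List.range_succ, List.filter_append, h]

lemma prefixTrace_isPrefix (act : ℕ → Act) {j k : ℕ} (hjk : j ≤ k) :
    prefixTrace ext act j <+: prefixTrace ext act k := by
  obtain ⟨d, rfl⟩ := Nat.exists_eq_add_of_le hjk
  rw [prefixTrace_add]
  exact List.prefix_append _ _

lemma ncard_eq_length_prefixTrace (act : ℕ → Act) (k : ℕ) :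
    {j | j < k ∧ act j ∈ ext}.ncard = (prefixTrace ext act k).length := by
  induction k with
  | zero => simp [prefixTrace_zero]
  | succ k ih =>
    have hfin : {j | j < k ∧ act j ∈ ext}.Finite := (Set.finite_lt_nat k).subset fun _ h => h.1
    by_cases h : act k ∈ ext
    · have hset : {j | j < k + 1 ∧ act j ∈ ext} = insert k {j | j < k ∧ act j ∈ ext} := by
        ext j; simp only [Set.mem_ofPred_eq, Set.mem_insert_iff]; grind
      rw [hset, Set.ncard_insert_of_notMem (by simp) hfin, ih, prefixTrace_succ]
      simp [atrace, h]
    · have hset : {j | j < k + 1 ∧ act j ∈ ext} = {j | j < k ∧ act j ∈ ext} := by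
        ext j; simp only [Set.mem_ofPred_eq]; grind
      rw [hset, ih, prefixTrace_succ]
      simp [atrace, h]

lemma exists_of_getElem?_prefixTrace {act : ℕ → Act} {k n : ℕ} {x : Act}
    (h : (prefixTrace ext act k)[n]? = some x) :
    ∃ i < k, act i ∈ ext ∧ (prefixTrace ext act i).length = n ∧ act i = x := by
  induction k with
  | zero => simp [prefixTrace_zero] at h
  | succ k ih =>
    rw [prefixTrace_succ, List.getElem?_append] at h
    split_ifs at h with hn
    · obtain ⟨i, hik, hi⟩ := ih h
      exact ⟨i, hik.trans k.lt_succ_self, hi⟩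
    · by_cases hk : act k ∈ ext
      · simp only [atrace, hk, if_true, List.getElem?_singleton] at h
        split_ifs at h with hn'
        exact ⟨k, k.lt_succ_self, hk, by omega, Option.some.inj h⟩
      · simp [atrace, hk] at h

lemma getElem?_prefixTrace_of_mem {act : ℕ → Act} {i k : ℕ} (hi : act i ∈ ext)
    (hik : i < k) : (prefixTrace ext act k)[(prefixTrace ext act i).length]? = some (act i) := by
  obtain ⟨t, ht⟩ := prefixTrace_isPrefix ext act (Nat.succ_le_of_lt hik)
  simp [← ht, prefixTrace_succ, atrace, hi]

lemma itrace_eq_some_iff {act : ℕ → Act} {n : ℕ} {x : Act} :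
    itrace ext act n = some x ↔ ∃ k, (prefixTrace ext act k)[n]? = some x := by
  simp only [itrace, ncard_eq_length_prefixTrace]
  constructor
  · intro h
    split_ifs at h with hex
    obtain ⟨hmem, hlen⟩ := hex.choose_spec
    exact ⟨_, hlen ▸ h ▸ getElem?_prefixTrace_of_mem ext hmem (Nat.lt_succ_self _)⟩
  · rintro ⟨k, hk⟩
    obtain ⟨i, -, hi, hlen, rfl⟩ := exists_of_getElem?_prefixTrace ext hk
    have hex : ∃ i, act i ∈ ext ∧ (prefixTrace ext act i).length = n := ⟨i, hi, hlen⟩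
    obtain ⟨hmem, hlen'⟩ := hex.choose_spec
    rw [dif_pos hex]
    have h1 := getElem?_prefixTrace_of_mem ext hmem (k := hex.choose + i + 1) (by omega)
    have h2 := getElem?_prefixTrace_of_mem ext hi (k := hex.choose + i + 1) (by omega)
    rw [hlen'] at h1
    rw [hlen] at h2
    exact h1.symm.trans h2

end PrefixTrace

lemma itrace_eq_of_prefixTrace_eq {Act : Type*} {ext ext' : Set Act} {act act' : ℕ → Act}
    (m : ℕ → ℕ) (hm : ∀ i, prefixTrace ext' act' (m i) = prefixTrace ext act i)
    (hcof : ∀ j, ∃ i, j ≤ m i) : itrace ext' act' = itrace ext act := by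
  funext n
  refine Option.ext fun x => ?_
  simp only [itrace_eq_some_iff]
  constructor
  · rintro ⟨k, hk⟩
    obtain ⟨i, hki⟩ := hcof k
    obtain ⟨t, ht⟩ := prefixTrace_isPrefix ext' act' hki
    refine ⟨i, ?_⟩
    rw [← hm, ← ht, List.getElem?_append_left (List.getElem?_eq_some_iff.1 hk).1, hk]
  · rintro ⟨k, hk⟩
    exact ⟨m k, hm k ▸ hk⟩

namespace LiveIndexMapII

variable {SA SB Act : Type*} {A : Automaton SA Act} {B : Automaton SB Act} {R : Set (SA × SB)}
  {M : Set (CPair SB)} {H : CPair SB → CPair SA} {α : InfExec SA Act} {β : InfExec SB Act}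
  {m : ℕ → ℕ}

lemma prefixTrace_eq (hm : LiveIndexMapII A B R M H α β m) (i : ℕ) :
    prefixTrace B.ext β.act (m i) = prefixTrace A.ext α.act i := by
  induction i with
  | zero => rw [hm.zero]; rfl
  | succ i ih =>
    obtain ⟨d, hd⟩ := Nat.exists_eq_add_of_le (hm.mono i.le_succ)
    have htr := hm.tr (i + 1) i.succ_pos
    rw [Nat.add_sub_cancel] at htr
    rw [hd, prefixTrace_add, ih, ← hd, htr, prefixTrace_succ]

lemma itrace_eq (hm : LiveIndexMapII A B R M H α β m) :
    itrace B.ext β.act = itrace A.ext α.act :=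
  itrace_eq_of_prefixTrace_eq m hm.prefixTrace_eq hm.cofinal

lemma exists_mem_Icc (hm : LiveIndexMapII A B R M H α β m) (j : ℕ) :
    ∃ i, 0 < i ∧ m (i - 1) ≤ j ∧ j ≤ m i := by
  classical
  have hspec := Nat.find_spec (hm.cofinal j)
  rcases Nat.eq_zero_or_pos (Nat.find (hm.cofinal j)) with h0 | hpos
  · rw [h0, hm.zero] at hspec
    exact ⟨1, one_pos, by simp [hm.zero], by omega⟩
  · have hmin := Nat.find_min (hm.cofinal j) (Nat.sub_lt hpos one_pos)
    exact ⟨_, hpos, (not_le.1 hmin).le, hspec⟩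

lemma sat (hm : LiveIndexMapII A B R M H α β m) {q : CPair SB} (hq : q ∈ M)
    (hα : α.Sat (H q)) : β.Sat q := by
  intro hR N
  have hαR : InfOften fun i => α.st i ∈ (H q).R := by
    intro N
    obtain ⟨j, hj, hjR⟩ := hR (m N + 1)
    obtain ⟨i, hi, hij, hji⟩ := hm.exists_mem_Icc j
    have hNi : N < i := lt_of_not_ge fun h => by have := hm.mono h; omega
    rcases hm.pairR q hq i hi ⟨j, hij, hji, hjR⟩ with h | h
    exacts [⟨i - 1, by omega, h⟩, ⟨i, hNi.le, h⟩]
  obtain ⟨i₀, hi₀⟩ := hm.cofinal N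
  obtain ⟨i, hi, hiG⟩ := hα hαR (i₀ + 1)
  obtain ⟨j, hij, -, hjG⟩ := hm.pairG q hq i (by omega) (Or.inr hiG)
  exact ⟨j, hi₀.trans ((hm.mono (by omega)).trans hij), hjG⟩

end LiveIndexMapII

section Konig

variable {S : Type*} (Lev : ℕ → Set S) (E : ℕ → S → S → Prop)

/-- Constant after `n`, so that a path up to level `n` is determined by its first `n + 1`
values. -/
def IsLevelPath (n : ℕ) (c : ℕ → S) : Prop :=
  (∀ t ≤ n, c t ∈ Lev t) ∧ (∀ t < n, E t (c t) (c (t + 1))) ∧ ∀ t, c (min t n) = c t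

variable {Lev E}

lemma IsLevelPath.ext {n : ℕ} {c d : ℕ → S} (hc : IsLevelPath Lev E n c)
    (hd : IsLevelPath Lev E n d) (h : ∀ t ≤ n, c t = d t) : c = d :=
  funext fun t => by rw [← hc.2.2 t, ← hd.2.2 t, h _ (min_le_right t n)]

lemma IsLevelPath.restrict {n i : ℕ} {c : ℕ → S} (hc : IsLevelPath Lev E n c)
    (hin : i ≤ n) : IsLevelPath Lev E i fun t => c (min t i) := by
  refine ⟨fun t ht => ?_, fun t ht => ?_, fun t => by simp⟩
  · simpa [min_eq_left ht] using hc.1 t (ht.trans hin)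
  · simpa [min_eq_left ht.le, min_eq_left (Nat.succ_le_of_lt ht)] using hc.2.1 t (by omega)

lemma exists_isLevelPath (hpred : ∀ i, ∀ v ∈ Lev (i + 1), ∃ u ∈ Lev i, E i u v)
    (n : ℕ) : ∀ w ∈ Lev n, ∃ c, IsLevelPath Lev E n c ∧ c n = w := by
  induction n with
  | zero => exact fun w hw => ⟨fun _ => w, ⟨by simpa, by simp, by simp⟩, rfl⟩
  | succ n ih =>
    intro w hw
    obtain ⟨v, hv, hvw⟩ := hpred n w hw
    obtain ⟨c, ⟨hcLev, hcE, -⟩, hcv⟩ := ih v hv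
    refine ⟨fun t => if t ≤ n then c t else w,
      ⟨fun t ht => ?_, fun t ht => ?_, fun t => ?_⟩, by simp⟩
    · dsimp only
      split_ifs with h
      exacts [hcLev t h, (show t = n + 1 by omega) ▸ hw]
    · rcases Nat.lt_or_ge t n with h | h
      · simpa [h.le, Nat.succ_le_of_lt h] using hcE t h
      · obtain rfl : t = n := by omega
        simpa [hcv] using hvw
    · by_cases h : t ≤ n
      · simp [min_eq_left (h.trans n.le_succ)]
      · simp [min_eq_right (Nat.succ_le_of_lt (not_le.1 h)), h]

/-- Kőnig's lemma, applied to the inverse system of finite paths ending at level `n`. -/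
theorem exists_seq_of_forall_exists_pred (hfin : ∀ i, (Lev i).Finite)
    (hne : ∀ i, (Lev i).Nonempty)
    (hpred : ∀ i, ∀ v ∈ Lev (i + 1), ∃ u ∈ Lev i, E i u v) :
    ∃ u : ℕ → S, (∀ i, u i ∈ Lev i) ∧ ∀ i, E i (u i) (u (i + 1)) := by
  let P (n : ℕ) := {c // IsLevelPath Lev E n c}
  have (n : ℕ) : Nonempty (P n) :=
    have ⟨c, hc, _⟩ := exists_isLevelPath hpred n _ (hne n).some_mem
    ⟨⟨c, hc⟩⟩
  have : Finite (P 0) := by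
    have := (hfin 0).to_subtype
    refine Finite.of_injective (fun c : P 0 => (⟨c.1 0, c.2.1 0 le_rfl⟩ : Lev 0)) ?_
    intro c d hcd
    refine Subtype.ext (c.2.ext d.2 fun t ht => ?_)
    rw [Nat.le_zero.1 ht]
    exact congrArg Subtype.val hcd
  have hfib (i : ℕ) (c : P i) :
      {d : P (i + 1) |
        (⟨fun t => d.1 (min t i), d.2.restrict i.le_succ⟩ : P i) = c}.Finite := by
    refine Set.Finite.of_finite_image (f := fun d : P (i + 1) => d.1 (i + 1))
      ((hfin (i + 1)).subset ?_) fun d hd d' hd' hdd' => Subtype.ext (d.2.ext d'.2 fun t ht => ?_)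
    · rintro _ ⟨d, -, rfl⟩
      exact d.2.1 (i + 1) le_rfl
    · rcases ht.lt_or_eq with ht | rfl
      · simpa [min_eq_left (Nat.le_of_lt_succ ht)] using
          congrArg (fun c : P i => c.1 t) (hd.trans hd'.symm)
      · exact hdd'
  obtain ⟨f, hf⟩ := exists_seq_forall_proj_of_forall_finite
    (α := P) (π := fun {i _} hij c => ⟨fun t => c.1 (min t i), c.2.restrict hij⟩)
    (fun _ c => Subtype.ext (funext c.2.2.2))
    (fun _ _ _ hij _ _ => Subtype.ext (funext fun t => by
      simp [min_eq_left ((min_le_right t _).trans hij)]))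
    hfib
  refine ⟨fun i => (f i).1 i, fun i => (f i).2.1 i le_rfl, fun i => ?_⟩
  have h := congrArg (fun c : P i => c.1 i) (hf (Nat.le_succ i))
  simp only [min_self] at h
  simpa [← h] using (f (i + 1)).2.2.1 i i.lt_succ_self

end Konig

section Concat

variable {S Act : Type*} (βs : ℕ → FinFrag S Act)

def fragOffset : ℕ → ℕ
  | 0 => 0
  | i + 1 => fragOffset i + (βs i).len

/-- Never a zero-length fragment. -/
noncomputable def fragIndex (n : ℕ) : ℕ := sInf {i | n < fragOffset βs (i + 1)}

noncomputable def concatFrags : InfExec S Act where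
  st n := (βs (fragIndex βs n)).st (n - fragOffset βs (fragIndex βs n))
  act n := (βs (fragIndex βs n)).act (n - fragOffset βs (fragIndex βs n))

variable {βs}

lemma fragOffset_mono : Monotone (fragOffset βs) :=
  monotone_nat_of_le_succ fun _ => Nat.le_add_right _ _

lemma fragOffset_cofinal (hpos : InfOften fun i => (βs i).len ≠ 0) (N : ℕ) :
    ∃ i, N ≤ fragOffset βs i := by
  induction N with
  | zero => exact ⟨0, le_rfl⟩
  | succ N ih =>
    obtain ⟨i, hi⟩ := ih
    obtain ⟨k, hik, hk⟩ := hpos i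
    have : fragOffset βs i ≤ fragOffset βs k := fragOffset_mono hik
    exact ⟨k + 1, show N + 1 ≤ fragOffset βs k + (βs k).len by omega⟩

lemma exists_eq_fragOffset_add (hpos : InfOften fun i => (βs i).len ≠ 0) (n : ℕ) :
    ∃ i t, t < (βs i).len ∧ n = fragOffset βs i + t := by
  classical
  have hex : ∃ i, n < fragOffset βs i := fragOffset_cofinal hpos (n + 1)
  obtain ⟨k, hk⟩ : ∃ k, Nat.find hex = k + 1 :=
    Nat.exists_eq_succ_of_ne_zero fun h => by simpa [h, fragOffset] using Nat.find_spec hex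
  have hlt : n < fragOffset βs (k + 1) := hk ▸ Nat.find_spec hex
  simp only [fragOffset] at hlt
  have hle : fragOffset βs k ≤ n := not_lt.1 (Nat.find_min hex (by omega))
  exact ⟨k, n - fragOffset βs k, by omega, by omega⟩

lemma fragIndex_eq {i t : ℕ} (ht : t < (βs i).len) :
    fragIndex βs (fragOffset βs i + t) = i := by
  have hmem : i ∈ {k | fragOffset βs i + t < fragOffset βs (k + 1)} :=
    show _ < fragOffset βs i + (βs i).len by omega
  refine le_antisymm (Nat.sInf_le hmem) (not_lt.1 fun hlt => ?_)
  have h1 : fragOffset βs i + t < fragOffset βs (fragIndex βs _ + 1) :=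
    Nat.sInf_mem ⟨i, hmem⟩
  have h2 : fragOffset βs (fragIndex βs _ + 1) ≤ fragOffset βs i := fragOffset_mono hlt
  omega

lemma concatFrags_act {i t : ℕ} (ht : t < (βs i).len) :
    (concatFrags βs).act (fragOffset βs i + t) = (βs i).act t := by
  simp [concatFrags, fragIndex_eq ht]

lemma concatFrags_st_of_lt {i t : ℕ} (ht : t < (βs i).len) :
    (concatFrags βs).st (fragOffset βs i + t) = (βs i).st t := by
  simp [concatFrags, fragIndex_eq ht]

variable (hchain : ∀ i, (βs (i + 1)).fstate = (βs i).lstate)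
include hchain

lemma fstate_eq_of_fragOffset_eq {i k : ℕ} (hik : i ≤ k)
    (h : fragOffset βs i = fragOffset βs k) : (βs i).fstate = (βs k).fstate := by
  induction k, hik using Nat.le_induction with
  | base => rfl
  | succ k hik ih =>
    have hk : fragOffset βs i ≤ fragOffset βs k := fragOffset_mono hik
    have hlen : (βs k).len = 0 := by simp only [fragOffset] at h; omega
    rw [ih (by simp only [fragOffset] at h; omega), hchain, FinFrag.lstate, hlen]
    rfl

lemma concatFrags_st_fragOffset (hpos : InfOften fun i => (βs i).len ≠ 0) (i : ℕ) :
    (concatFrags βs).st (fragOffset βs i) = (βs i).fstate := by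
  obtain ⟨k, t, ht, he⟩ := exists_eq_fragOffset_add hpos (fragOffset βs i)
  have hik : i ≤ k := not_lt.1 fun hki => by
    have := fragOffset_mono (βs := βs) (Nat.succ_le_of_lt hki)
    simp only [fragOffset] at this
    omega
  have hk := fragOffset_mono (βs := βs) hik
  obtain rfl : t = 0 := by omega
  rw [he, concatFrags_st_of_lt ht, fstate_eq_of_fragOffset_eq hchain hik (by omega)]
  rfl

lemma concatFrags_st (hpos : InfOften fun i => (βs i).len ≠ 0) {i t : ℕ}
    (ht : t ≤ (βs i).len) : (concatFrags βs).st (fragOffset βs i + t) = (βs i).st t := by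
  rcases ht.lt_or_eq with ht | rfl
  · exact concatFrags_st_of_lt ht
  · exact (concatFrags_st_fragOffset hchain hpos (i + 1)).trans (hchain i)

lemma concatFrags_isExecOf {B : Automaton S Act} (hpos : InfOften fun i => (βs i).len ≠ 0)
    (hfrag : ∀ i, (βs i).IsFragOf B) (hstart : (βs 0).fstate ∈ B.start) :
    (concatFrags βs).IsExecOf B := by
  refine ⟨(concatFrags_st_fragOffset hchain hpos 0).symm ▸ hstart, fun n => ?_⟩
  obtain ⟨i, t, ht, rfl⟩ := exists_eq_fragOffset_add hpos n
  rw [concatFrags_st_of_lt ht, concatFrags_act ht, add_assoc, concatFrags_st hchain hpos ht]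
  exact hfrag i t ht

end Concat

lemma segTrace_concatFrags {S Act : Type*} (ext : Set Act) (βs : ℕ → FinFrag S Act) (i : ℕ) :
    segTrace ext (concatFrags βs).act (fragOffset βs i) (fragOffset βs (i + 1)) =
      (βs i).trace ext := by
  simp only [segTrace, FinFrag.trace, fragOffset, Nat.add_sub_cancel_left]
  congr 1
  exact List.map_congr_left fun t ht => concatFrags_act (List.mem_range.1 ht)

theorem liveIndexMapII_concatFrags {SA SB Act : Type*} {A : Automaton SA Act}
    {B : Automaton SB Act} {R : Set (SA × SB)} {M : Set (CPair SB)} {H : CPair SB → CPair SA}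
    {α : InfExec SA Act} {βs : ℕ → FinFrag SB Act}
    (hchain : ∀ i, (βs (i + 1)).fstate = (βs i).lstate)
    (hpos : InfOften fun i => (βs i).len ≠ 0)
    (hrel : ∀ i, (α.st i, (βs i).fstate) ∈ R)
    (htr : ∀ i, (βs i).trace B.ext = atrace A.ext (α.act i))
    (hpair : ∀ i, ∀ q ∈ M,
      ((βs i).Meets q.R → α.st i ∈ (H q).R ∨ α.st (i + 1) ∈ (H q).R) ∧
        ((α.st i ∈ (H q).G ∨ α.st (i + 1) ∈ (H q).G) → (βs i).Meets q.G)) :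
    LiveIndexMapII A B R M H α (concatFrags βs) (fragOffset βs) where
  zero := rfl
  mono := fragOffset_mono
  rel i := concatFrags_st_fragOffset hchain hpos i ▸ hrel i
  tr i hi := by
    obtain ⟨k, rfl⟩ : ∃ k, i = k + 1 := Nat.exists_eq_succ_of_ne_zero hi.ne'
    simpa [segTrace_concatFrags] using htr k
  cofinal := fragOffset_cofinal hpos
  pairR q hq i hi := by
    obtain ⟨k, rfl⟩ : ∃ k, i = k + 1 := Nat.exists_eq_succ_of_ne_zero hi.ne'
    simp only [Nat.add_sub_cancel]
    rintro ⟨j, hkj, hjk, hjR⟩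
    obtain ⟨t, rfl⟩ := Nat.exists_eq_add_of_le hkj
    have ht : t ≤ (βs k).len := by simp only [fragOffset] at hjk; omega
    rw [concatFrags_st hchain hpos ht] at hjR
    exact (hpair k q hq).1 ⟨t, ht, hjR⟩
  pairG q hq i hi := by
    obtain ⟨k, rfl⟩ : ∃ k, i = k + 1 := Nat.exists_eq_succ_of_ne_zero hi.ne'
    simp only [Nat.add_sub_cancel]
    intro hG
    obtain ⟨t, ht, htG⟩ := (hpair k q hq).2 hG
    refine ⟨fragOffset βs k + t, by simp, by simp only [fragOffset]; omega, ?_⟩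
    rwa [concatFrags_st hchain hpos ht]

lemma InfExec.IsExecOf.reachable {S Act : Type*} {A : Automaton S Act} {e : InfExec S Act}
    (he : e.IsExecOf A) (i : ℕ) : Reachable A (e.st i) :=
  ⟨e.take i, ⟨fun t _ => he.2 t, he.1⟩, i, le_rfl, rfl⟩

theorem IsLPBackwardSim.exists_liveIndexMapII {SA SB Act : Type*} {A : Automaton SA Act}
    {B : Automaton SB Act} {L : Set (CPair SA)} {M : Set (CPair SB)} {IA : Set SA} {IB : Set SB}
    {g : Set (SA × SB)} {h : CPair SB → CPair SA} (hsim : IsLPBackwardSim A B L M IA IB g h)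
    (hIA : IsAutInvariant A IA) (hg : ImageFinite g) {α : InfExec SA Act}
    (hα : α ∈ lexecs A L) :
    ∃ β : InfExec SB Act, ∃ m, β.IsExecOf B ∧ LiveIndexMapII A B g M h α β m := by
  have hI i : α.st i ∈ IA := hIA _ (hα.1.reachable i)
  obtain ⟨u, hu, hstep⟩ := exists_seq_of_forall_exists_pred
    (Lev := fun i => gImg g (α.st i) ∩ IB)
    (E := fun i u u' => ∃ β : FinFrag SB Act, β.IsFragOf B ∧ β.fstate = u ∧
      β.lstate = u' ∧ β.trace B.ext = atrace A.ext (α.act i) ∧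
      ∀ q ∈ M, (β.Meets q.R → α.st i ∈ (h q).R ∨ α.st (i + 1) ∈ (h q).R) ∧
        ((α.st i ∈ (h q).G ∨ α.st (i + 1) ∈ (h q).G) → β.Meets q.G))
    (fun i => (hg _).subset Set.inter_subset_left) (fun i => hsim.nonempty_cond _ (hI i))
    (fun i u' hu' => by
      obtain ⟨β, hβ, hfst, hlst, hrest⟩ := hsim.step_cond _ _ _ (hα.1.2 i) (hI i) u' hu'
      exact ⟨β.fstate, hfst, β, hβ, rfl, hlst, hrest⟩)
  choose βs hfrag hfst hlst htr hpair using hstep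
  have hchain i : (βs (i + 1)).fstate = (βs i).lstate := (hfst (i + 1)).trans (hlst i).symm
  have hpos : InfOften fun i => (βs i).len ≠ 0 := fun N => by
    obtain ⟨n, hn, hsilent⟩ := hsim.nonsilent α hα N
    exact ⟨n, hn, fun h0 => hsilent
      ⟨hI n, βs n, hfrag n, hfst n ▸ hu n, hlst n ▸ (hu (n + 1)).1, htr n, h0⟩⟩
  refine ⟨concatFrags βs, fragOffset βs,
    concatFrags_isExecOf hchain hpos hfrag (hfst 0 ▸ hsim.start_cond _ hα.1.1 (hu 0)),
    liveIndexMapII_concatFrags hchain hpos (fun i => hfst i ▸ (hu i).1) htr hpair⟩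

theorem stmt9_general {SA SB Act : Type*} (A : Automaton SA Act) (B : Automaton SB Act)
    (L : Set (CPair SA)) (M : Set (CPair SB))
    (hsim : ∃ (IA : Set SA) (IB : Set SB) (g : Set (SA × SB)) (h : CPair SB → CPair SA),
      IsAutInvariant A IA ∧ IsAutInvariant B IB ∧
        IsLPBackwardSim A B L M IA IB g h ∧ ImageFinite g) :
    tracesOf A.ext (lexecs A L) ⊆ tracesOf B.ext (lexecs B M) := by
  obtain ⟨IA, IB, g, h, hIA, -, hsim, hg⟩ := hsim
  rintro _ ⟨α, hα, rfl⟩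
  obtain ⟨β, m, hβ, hm⟩ := hsim.exists_liveIndexMapII hIA hg hα
  exact ⟨β, ⟨hβ, fun q hq => hm.sat hq (hsim.h_total q hq α hα)⟩, hm.itrace_eq⟩

/-- Liveness Theorem, backward-simulation case: an image-finite
liveness-preserving backward simulation implies the live preorder. -/
theorem stmt9 {SA SB Act : Type*} (A : Automaton SA Act) (B : Automaton SB Act)
    (L : Set (CPair SA)) (M : Set (CPair SB))
    (hL : IsLivenessCondition A L) (hM : IsLivenessCondition B M)
    (hext : A.ext = B.ext)
    (hsim : ∃ (IA : Set SA) (IB : Set SB) (g : Set (SA × SB)) (h : CPair SB → CPair SA),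
      IsAutInvariant A IA ∧ IsAutInvariant B IB ∧
        IsLPBackwardSim A B L M IA IB g h ∧ ImageFinite g) :
    tracesOf A.ext (lexecs A L) ⊆ tracesOf B.ext (lexecs B M) :=
  stmt9_general A B L M hsim
end

section
/- Chaining of complemented-pairs: Let (A, L) be a live automaton, let r ∈ clos(L), and let W be a finite subset of clos(L) such that r.G ⊆ ⋃_{w ∈ W} w.R. Then ⟨r.R, ⋃_{w ∈ W} w.G⟩ ∈ clos(L); in particular, for every live execution α of (A, L), if α contains infinitely many states in r.R then α contains infinitely many states in ⋃_{w ∈ W} w.G. -/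
/- Background formalization: automata, executions, traces, complemented-pairs
   liveness conditions, liveness-preserving simulation relations, etc. -/

open Classical

/-! By pigeonhole over the finite set `W`, a live execution that visits `⋃ w ∈ W, w.R`
infinitely often visits some single `w.R` infinitely often, and then `w ∈ clos(L)` forces
infinitely many visits to `w.G`. -/

section Chaining

variable {S Act : Type*}

theorem infOften_iff_frequently_atTop {P : ℕ → Prop} :
    InfOften P ↔ ∃ᶠ n in Filter.atTop, P n :=
  Filter.frequently_atTop.symm

theorem InfOften.mono {P Q : ℕ → Prop} (hP : InfOften P) (hPQ : ∀ n, P n → Q n) :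
    InfOften Q := fun n =>
  let ⟨m, hnm, hm⟩ := hP n
  ⟨m, hnm, hPQ m hm⟩

theorem infOften_exists_finite {ι : Type*} {I : Set ι} (hI : I.Finite) {P : ι → ℕ → Prop} :
    InfOften (fun n => ∃ i ∈ I, P i n) ↔ ∃ i ∈ I, InfOften (P i) := by
  simp only [infOften_iff_frequently_atTop, Filter.frequently_exists_finite hI]

theorem InfExec.Sat.chain {e : InfExec S Act} {r : CPair S} {W : Set (CPair S)}
    (hWfin : W.Finite) (hr : e.Sat r) (hW : ∀ w ∈ W, e.Sat w) (hRG : r.G ⊆ ⋃ w ∈ W, w.R) :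
    e.Sat ⟨r.R, ⋃ w ∈ W, w.G⟩ := by
  intro hR
  have hWR : InfOften fun n => ∃ w ∈ W, e.st n ∈ w.R :=
    (hr hR).mono fun n hn => by simpa only [Set.mem_iUnion, exists_prop] using hRG hn
  obtain ⟨w, hw, hwR⟩ := (infOften_exists_finite hWfin).1 hWR
  exact (hW w hw hwR).mono fun n hn => Set.mem_biUnion hw hn

theorem chain_mem_closL {A : Automaton S Act} {L : Set (CPair S)} {r : CPair S}
    {W : Set (CPair S)} (hWfin : W.Finite) (hr : r ∈ closL A L) (hWsub : W ⊆ closL A L)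
    (hRG : r.G ⊆ ⋃ w ∈ W, w.R) :
    CPair.mk r.R (⋃ w ∈ W, w.G) ∈ closL A L := fun e he =>
  (hr e he).chain hWfin (fun _ hw => hWsub hw e he) hRG

end Chaining

theorem stmt11_general {S Act : Type*} (A : Automaton S Act) (L : Set (CPair S))
    (r : CPair S) (hr : r ∈ closL A L)
    (W : Set (CPair S)) (hWfin : W.Finite) (hWsub : W ⊆ closL A L)
    (hRG : r.G ⊆ ⋃ w ∈ W, w.R) :
    CPair.mk r.R (⋃ w ∈ W, w.G) ∈ closL A L ∧
      ∀ α ∈ lexecs A L,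
        InfOften (fun n => α.st n ∈ r.R) → InfOften (fun n => α.st n ∈ ⋃ w ∈ W, w.G) :=
  have hclos := chain_mem_closL hWfin hr hWsub hRG
  ⟨hclos, hclos⟩

/-- chaining of complemented-pairs. -/
theorem stmt11 {S Act : Type*} (A : Automaton S Act) (L : Set (CPair S))
    (hL : IsLivenessCondition A L)
    (r : CPair S) (hr : r ∈ closL A L)
    (W : Set (CPair S)) (hWfin : W.Finite) (hWsub : W ⊆ closL A L)
    (hRG : r.G ⊆ ⋃ w ∈ W, w.R) :
    CPair.mk r.R (⋃ w ∈ W, w.G) ∈ closL A L ∧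
      ∀ α ∈ lexecs A L,
        InfOften (fun n => α.st n ∈ r.R) → InfOften (fun n => α.st n ∈ ⋃ w ∈ W, w.G) :=
  stmt11_general A L r hr W hWfin hWsub hRG
end
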